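/- Let λ, μ be closed Lagrangian subspaces of H forming a Fredholm pair. Then the Souriau map S_λ(μ) = −τ_μ ∘ τ_λ is a unitary operator on H_J, and Id + S_λ(μ) = Id − τ_μ∘τ_λ is a Fredholm operator on H_J. -/

import Mathlib

set_option linter.unusedSectionVars false

open Module RealInnerProductSpace

variable {H : Type*} [NormedAddCommGroup H] [InnerProductSpace ℝ H] [CompleteSpace H]

/-- A closed Lagrangian subspace of the real symplectic Hilbert space `H` with symplectic
form `ω(x,y) = ⟪J x, y⟫`: a closed subspace which equals its own `ω`-annihilator. -/
def IsLagrangian (J : H →L[ℝ] H) (lam : Submodule ℝ H) : Prop :=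
  IsClosed (lam : Set H) ∧ ∀ x : H, x ∈ lam ↔ ∀ y ∈ lam, ⟪J x, y⟫ = 0

/-- The pair `(lam, mu)` is a Fredholm pair of subspaces. -/
def IsFredholmPair (lam mu : Submodule ℝ H) : Prop :=
  FiniteDimensional ℝ ↥(lam ⊓ mu) ∧ IsClosed ((lam ⊔ mu : Submodule ℝ H) : Set H) ∧
    FiniteDimensional ℝ (H ⧸ (lam ⊔ mu))

/-- A bounded real-linear operator is Fredholm. -/
def IsFredholmR (T : H →L[ℝ] H) : Prop :=
  FiniteDimensional ℝ (LinearMap.ker (T : H →ₗ[ℝ] H)) ∧ IsClosed (LinearMap.range (T : H →ₗ[ℝ] H) : Set H) ∧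
    FiniteDimensional ℝ (H ⧸ LinearMap.range (T : H →ₗ[ℝ] H))

/-- The orthogonal projection onto a closed subspace, as an operator `H → H`. -/
noncomputable def projCLM (lam : Submodule ℝ H) [CompleteSpace lam] : H →L[ℝ] H :=
  lam.subtypeL.comp (lam.orthogonalProjectionOnto)

/-- The conjugation `τ_λ = 2P(λ) − Id` determined by the real structure `λ`. -/
noncomputable def conjOf (lam : Submodule ℝ H) [CompleteSpace lam] : H →L[ℝ] H :=
  (2 : ℝ) • projCLM lam - 1

/-!
`τ_K = 2 P_K - 1` is the orthogonal reflection in `K`, so `S = -τ_μ τ_λ` is a product of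
isometric involutions. For a Lagrangian `λ` one has `λᗮ = Jλ`, so `J` swaps `λ` and `λᗮ` and
anticommutes with `τ_λ`; hence `S` commutes with `J`.
Expanding, `1 - τ_μ τ_λ = 2 (P_μ P_{λᗮ} + P_{μᗮ} P_λ)`, whose two summands take values in `μ` and
`μᗮ`. Its kernel therefore lies in `(λ ⊓ μ) ⊔ (λ ⊔ μ)ᗮ`, and its range is
`{y | P_μ y ∈ λᗮ ⊔ μᗮ, P_{μᗮ} y ∈ λ ⊔ μ}`. Since `λᗮ ⊔ μᗮ = J (λ ⊔ μ)`, the Fredholm-pair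
hypothesis makes the kernel finite-dimensional and the range closed of finite codimension.
-/

section Projection

variable {𝕜 E : Type*} [RCLike 𝕜] [NormedAddCommGroup E] [InnerProductSpace 𝕜 E]
  {K L : Submodule 𝕜 E}

theorem Submodule.starProjection_add_eq_left [K.HasOrthogonalProjection] {a b : E} (ha : a ∈ K)
    (hb : b ∈ Kᗮ) : K.starProjection (a + b) = a := by
  rw [map_add, K.starProjection_eq_self_iff.2 ha, K.starProjection_apply_eq_zero_iff.2 hb,
    add_zero]

theorem Submodule.starProjection_orthogonal_add_eq_right [K.HasOrthogonalProjection] {a b : E}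
    (ha : a ∈ K) (hb : b ∈ Kᗮ) : Kᗮ.starProjection (a + b) = b := by
  rw [add_comm]
  exact Kᗮ.starProjection_add_eq_left hb (K.le_orthogonal_orthogonal ha)

theorem Submodule.starProjection_mem_sup_orthogonal [L.HasOrthogonalProjection] {v : E}
    (hv : v ∈ K) : L.starProjection v ∈ K ⊔ Lᗮ := by
  rw [show L.starProjection v = v - (v - L.starProjection v) by abel]
  exact Submodule.sub_mem _ (Submodule.mem_sup_left hv)
    (Submodule.mem_sup_right (L.sub_starProjection_mem_orthogonal v))

theorem Submodule.exists_mem_starProjection_eq [L.HasOrthogonalProjection] {z : E}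
    (hz : L.starProjection z ∈ K ⊔ Lᗮ) : ∃ p ∈ K, L.starProjection p = L.starProjection z := by
  obtain ⟨p, hp, q, hq, hpq⟩ := Submodule.mem_sup.1 hz
  refine ⟨p, hp, ?_⟩
  have := congrArg L.starProjection hpq
  rwa [map_add, L.starProjection_apply_eq_zero_iff.2 hq, add_zero,
    L.starProjection_eq_self_iff.2 (L.starProjection_apply_mem z)] at this

theorem Submodule.reflection_apply_eq_neg_of_map_le [K.HasOrthogonalProjection] (f : E →ₗ[𝕜] E)
    (hK : K.map f ≤ Kᗮ) (hKo : Kᗮ.map f ≤ K) (x : E) :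
    K.reflection (f x) = -f (K.reflection x) := by
  obtain ⟨u, hu, v, hv, rfl⟩ := K.exists_add_mem_mem_orthogonal x
  rw [map_add, map_add, map_add, K.reflection_mem_subspace_eq_self hu,
    K.reflection_mem_subspace_orthogonalComplement_eq_neg hv,
    K.reflection_mem_subspace_orthogonalComplement_eq_neg (hK (Submodule.mem_map_of_mem hu)),
    K.reflection_mem_subspace_eq_self (hKo (Submodule.mem_map_of_mem hv)), map_add, map_neg]
  abel

theorem Submodule.finiteDimensional_orthogonal_of_quotient (M : Submodule 𝕜 E)
    [FiniteDimensional 𝕜 (E ⧸ M)] : FiniteDimensional 𝕜 Mᗮ :=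
  Module.Finite.iff_fg.mpr (Submodule.CoFG.fg_of_disjoint M.orthogonal_disjoint.symm ‹_›)

end Projection

theorem Submodule.CoFG.comap {K V W : Type*} [Field K] [AddCommGroup V] [Module K V]
    [AddCommGroup W] [Module K W] {N : Submodule K W} (hN : N.CoFG) (f : V →ₗ[K] W) :
    (N.comap f).CoFG := by
  rw [← N.ker_mkQ, ← LinearMap.ker_comp]
  exact Submodule.CoFG.ker _

theorem Submodule.map_eq_comap_of_apply_apply_eq_neg {R E : Type*} [Ring R] [AddCommGroup E]
    [Module R E] (J : E →ₗ[R] E) (hJ2 : ∀ x, J (J x) = -x) (M : Submodule R E) :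
    M.map J = M.comap J := by
  ext y
  refine ⟨?_, fun hy => ⟨-J y, M.neg_mem hy, by rw [map_neg, hJ2, neg_neg]⟩⟩
  rintro ⟨x, hx, rfl⟩
  simpa [Submodule.mem_comap, hJ2] using hx

section Conjugation

variable {E : Type*} [NormedAddCommGroup E] [InnerProductSpace ℝ E]

theorem conjOf_eq (K : Submodule ℝ E) [CompleteSpace K] :
    conjOf K = (2 : ℝ) • K.starProjection - 1 :=
  rfl

theorem conjOf_apply (K : Submodule ℝ E) [CompleteSpace K] (x : E) :
    conjOf K x = K.reflection x := by
  rw [K.reflection_apply, conjOf_eq, two_smul, two_smul]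
  rfl

theorem coe_neg_conjOf_comp_conjOf (lam mu : Submodule ℝ E) [CompleteSpace lam]
    [CompleteSpace mu] :
    ⇑(-(conjOf mu ∘L conjOf lam)) = (lam.reflection.trans mu.reflection).trans (.neg ℝ) := by
  ext x
  simp [conjOf_apply]

end Conjugation

section Lagrangian

variable {E : Type*} [NormedAddCommGroup E] [InnerProductSpace ℝ E] {J : E →L[ℝ] E}

theorem IsLagrangian.orthogonal_eq_comap (hJ2 : ∀ x, J (J x) = -x) {lam : Submodule ℝ E}
    (hlam : IsLagrangian J lam) : lamᗮ = lam.comap (J : E →ₗ[ℝ] E) := by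
  ext z
  simp only [Submodule.mem_orthogonal, Submodule.mem_comap, ContinuousLinearMap.coe_coe,
    hlam.2 (J z), hJ2, inner_neg_left, neg_eq_zero, real_inner_comm z]

theorem IsLagrangian.map_eq_orthogonal (hJ2 : ∀ x, J (J x) = -x) {lam : Submodule ℝ E}
    (hlam : IsLagrangian J lam) : lam.map (J : E →ₗ[ℝ] E) = lamᗮ := by
  rw [hlam.orthogonal_eq_comap hJ2, Submodule.map_eq_comap_of_apply_apply_eq_neg _ hJ2]

theorem IsLagrangian.conjOf_anticomm (hJ2 : ∀ x, J (J x) = -x) {lam : Submodule ℝ E}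
    [CompleteSpace lam] (hlam : IsLagrangian J lam) (x : E) :
    conjOf lam (J x) = -J (conjOf lam x) := by
  simp only [conjOf_apply]
  refine lam.reflection_apply_eq_neg_of_map_le (J : E →ₗ[ℝ] E) (hlam.map_eq_orthogonal hJ2).le ?_ x
  rw [hlam.orthogonal_eq_comap hJ2]
  exact Submodule.map_comap_le _ _

theorem IsLagrangian.orthogonal_sup_orthogonal (hJ2 : ∀ x, J (J x) = -x)
    {lam mu : Submodule ℝ E} (hlam : IsLagrangian J lam) (hmu : IsLagrangian J mu) :
    lamᗮ ⊔ muᗮ = (lam ⊔ mu).comap (J : E →ₗ[ℝ] E) := by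
  rw [← hlam.map_eq_orthogonal hJ2, ← hmu.map_eq_orthogonal hJ2, ← Submodule.map_sup,
    Submodule.map_eq_comap_of_apply_apply_eq_neg _ hJ2]

end Lagrangian

section Fredholm

variable {E : Type*} [NormedAddCommGroup E] [InnerProductSpace ℝ E]
  (lam mu : Submodule ℝ E) [CompleteSpace lam] [CompleteSpace mu]

theorem one_sub_conjOf_comp_conjOf : 1 - conjOf mu ∘L conjOf lam = (2 : ℝ) •
    (mu.starProjection ∘L lamᗮ.starProjection + muᗮ.starProjection ∘L lam.starProjection) := by
  ext x
  simp only [conjOf_eq, Submodule.starProjection_orthogonal', sub_apply, smul_apply,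
    ContinuousLinearMap.comp_apply, add_apply, one_apply_eq_self, map_sub, map_smul]
  module

theorem ker_one_sub_conjOf_comp_conjOf_le :
    LinearMap.ker ((1 - conjOf mu ∘L conjOf lam : E →L[ℝ] E) : E →ₗ[ℝ] E) ≤
      (lam ⊓ mu) ⊔ (lam ⊔ mu)ᗮ := by
  intro x hx
  rw [LinearMap.mem_ker, ContinuousLinearMap.coe_coe, one_sub_conjOf_comp_conjOf, smul_apply,
    smul_eq_zero, add_apply] at hx
  have hsum := hx.resolve_left two_ne_zero
  have horth := mu.starProjection_add_eq_left
    (mu.starProjection_apply_mem (lamᗮ.starProjection x))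
    (muᗮ.starProjection_apply_mem (lam.starProjection x))
  have hmem := mu.starProjection_orthogonal_add_eq_right
    (mu.starProjection_apply_mem (lamᗮ.starProjection x))
    (muᗮ.starProjection_apply_mem (lam.starProjection x))
  simp only [ContinuousLinearMap.comp_apply] at hsum
  rw [hsum, map_zero] at horth hmem
  rw [eq_comm, Submodule.starProjection_apply_eq_zero_iff] at horth hmem
  rw [mu.orthogonal_orthogonal] at hmem
  rw [← lam.starProjection_add_starProjection_orthogonal x, ← Submodule.inf_orthogonal]
  exact Submodule.add_mem_sup ⟨lam.starProjection_apply_mem x, hmem⟩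
    ⟨lamᗮ.starProjection_apply_mem x, horth⟩

theorem range_one_sub_conjOf_comp_conjOf :
    LinearMap.range ((1 - conjOf mu ∘L conjOf lam : E →L[ℝ] E) : E →ₗ[ℝ] E) =
      (lamᗮ ⊔ muᗮ).comap (mu.starProjection : E →ₗ[ℝ] E) ⊓
        (lam ⊔ mu).comap (muᗮ.starProjection : E →ₗ[ℝ] E) := by
  apply le_antisymm
  · rintro _ ⟨x, rfl⟩
    have ha := mu.starProjection_apply_mem (lamᗮ.starProjection x)
    have hb := muᗮ.starProjection_apply_mem (lam.starProjection x)
    simp only [ContinuousLinearMap.coe_coe, one_sub_conjOf_comp_conjOf, smul_apply, add_apply,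
      ContinuousLinearMap.comp_apply, Submodule.mem_inf, Submodule.mem_comap, map_smul,
      mu.starProjection_add_eq_left ha hb, mu.starProjection_orthogonal_add_eq_right ha hb]
    refine ⟨Submodule.smul_mem _ _ ?_, Submodule.smul_mem _ _ ?_⟩
    · exact Submodule.starProjection_mem_sup_orthogonal (lamᗮ.starProjection_apply_mem x)
    · simpa only [mu.orthogonal_orthogonal] using
        Submodule.starProjection_mem_sup_orthogonal (L := muᗮ) (lam.starProjection_apply_mem x)
  · rintro y ⟨hy₁, hy₂⟩
    obtain ⟨p, hp, hpy⟩ := Submodule.exists_mem_starProjection_eq hy₁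
    obtain ⟨q, hq, hqy⟩ := Submodule.exists_mem_starProjection_eq (L := muᗮ) (K := lam)
      (by rwa [mu.orthogonal_orthogonal])
    refine ⟨(1 / 2 : ℝ) • (p + q), ?_⟩
    simp only [ContinuousLinearMap.coe_coe, one_sub_conjOf_comp_conjOf, smul_apply, add_apply,
      ContinuousLinearMap.comp_apply, map_smul, map_add, lamᗮ.starProjection_eq_self_iff.2 hp,
      lam.starProjection_apply_eq_zero_iff.2 hp, lam.starProjection_eq_self_iff.2 hq,
      lam.starProjection_orthogonal_apply_eq_zero hq, map_zero, add_zero, zero_add, hpy, hqy]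
    rw [← smul_add, smul_smul, mu.starProjection_add_starProjection_orthogonal]
    norm_num

theorem isFredholmR_one_sub_conjOf_comp_conjOf [FiniteDimensional ℝ ↥(lam ⊓ mu)]
    (hM : IsClosed ((lam ⊔ mu : Submodule ℝ E) : Set E)) [FiniteDimensional ℝ (E ⧸ (lam ⊔ mu))]
    (hN : IsClosed ((lamᗮ ⊔ muᗮ : Submodule ℝ E) : Set E))
    [FiniteDimensional ℝ (E ⧸ (lamᗮ ⊔ muᗮ))] :
    IsFredholmR (1 - conjOf mu ∘L conjOf lam) := by
  have := (lam ⊔ mu).finiteDimensional_orthogonal_of_quotient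
  refine ⟨Submodule.finiteDimensional_of_le (ker_one_sub_conjOf_comp_conjOf_le lam mu), ?_, ?_⟩
  · rw [range_one_sub_conjOf_comp_conjOf]
    exact (hN.preimage mu.starProjection.continuous).inter
      (hM.preimage muᗮ.starProjection.continuous)
  · rw [range_one_sub_conjOf_comp_conjOf]
    exact (Submodule.CoFG.comap ‹_› _).inf (Submodule.CoFG.comap ‹_› _)

end Fredholm

theorem souriau_unitary_and_fredholm_general
    (J : H →L[ℝ] H) (hJ2 : J ∘L J = -1)
    (lam mu : Submodule ℝ H) (hlam : IsLagrangian J lam) (hmu : IsLagrangian J mu)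
    [CompleteSpace lam] [CompleteSpace mu]
    (hpair : IsFredholmPair lam mu) :
    (∀ x : H, ‖(-(conjOf mu ∘L conjOf lam)) x‖ = ‖x‖) ∧
      Function.Bijective (-(conjOf mu ∘L conjOf lam)) ∧
      (-(conjOf mu ∘L conjOf lam)) ∘L J = J ∘L (-(conjOf mu ∘L conjOf lam)) ∧
      IsFredholmR (1 + -(conjOf mu ∘L conjOf lam)) := by
  have hJJ (x : H) : J (J x) = -x := by simpa using DFunLike.congr_fun hJ2 x
  refine ⟨?_, ?_, ?_, ?_⟩
  · rw [coe_neg_conjOf_comp_conjOf]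
    exact LinearIsometryEquiv.norm_map _
  · rw [coe_neg_conjOf_comp_conjOf]
    exact LinearIsometryEquiv.bijective _
  · ext x
    simp [hlam.conjOf_anticomm hJJ, hmu.conjOf_anticomm hJJ]
  · obtain ⟨h_inf, hM, hMq⟩ := hpair
    have hN := hlam.orthogonal_sup_orthogonal hJJ hmu
    have : FiniteDimensional ℝ (H ⧸ (lamᗮ ⊔ muᗮ)) := hN ▸ Submodule.CoFG.comap hMq _
    rw [← sub_eq_add_neg]
    exact isFredholmR_one_sub_conjOf_comp_conjOf lam mu hM (hN ▸ hM.preimage J.continuous)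

/-- For closed Lagrangian subspaces `λ, μ` forming a Fredholm pair, the Souriau map
`S_λ(μ) = −τ_μ ∘ τ_λ` is a unitary operator on `H_J` (an isometric bijection commuting with
`J`), and `Id + S_λ(μ) = Id − τ_μ∘τ_λ` is a Fredholm operator on `H_J`. -/
theorem souriau_unitary_and_fredholm
    (J : H →L[ℝ] H) (hJ2 : J ∘L J = -1)
    (hJorth : ∀ x y : H, ⟪J x, J y⟫ = ⟪x, y⟫)
    (lam mu : Submodule ℝ H) (hlam : IsLagrangian J lam) (hmu : IsLagrangian J mu)
    [CompleteSpace lam] [CompleteSpace mu]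
    (hpair : IsFredholmPair lam mu) :
    (∀ x : H, ‖(-(conjOf mu ∘L conjOf lam)) x‖ = ‖x‖) ∧
      Function.Bijective (-(conjOf mu ∘L conjOf lam)) ∧
      (-(conjOf mu ∘L conjOf lam)) ∘L J = J ∘L (-(conjOf mu ∘L conjOf lam)) ∧
      IsFredholmR (1 + -(conjOf mu ∘L conjOf lam)) :=
  souriau_unitary_and_fredholm_general J hJ2 lam mu hlam hmu hpair
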